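/- Let f be an optimal tree solution with tree structure (T,L,U), y the associated tree potential, and S = {a ∉ T : c̄_a = 0}. Then the flows f + λ χ(C_a), for a ∈ S and integers 1 ≤ λ ≤ u(C_a), are pairwise distinct optimal integer flows, each different from f; consequently the number F of optimal integer flows satisfies F ≥ Σ_{a∈S} u(C_a). -/

import Mathlib

open scoped Classical
noncomputable section

/-- A network: finite directed graph with arc set `A`, lower/upper capacities `l`, `u`,
node balances `b` and arc costs `c`. -/
structure Network (V : Type) [Fintype V] [DecidableEq V] where
  A : Finset (V × V)
  l : V × V → ℤ
  u : V × V → ℤ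
  b : V → ℤ
  c : V × V → ℝ

variable {V : Type} [Fintype V] [DecidableEq V]

namespace Network

/-- No anti-parallel arcs, and `0 ≤ l ≤ u` on every arc. -/
def Wellformed (N : Network V) : Prop :=
  (∀ a ∈ N.A, (a.2, a.1) ∉ N.A) ∧ ∀ a ∈ N.A, 0 ≤ N.l a ∧ N.l a ≤ N.u a

/-- A feasible integer flow: capacity constraints, vanishing outside `A`, flow balance. -/
def Feasible (N : Network V) (f : V × V → ℤ) : Prop :=
  (∀ a ∈ N.A, N.l a ≤ f a ∧ f a ≤ N.u a) ∧
  (∀ a, a ∉ N.A → f a = 0) ∧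
  ∀ i : V, ((∑ a ∈ N.A.filter fun a => a.1 = i, f a)
         - ∑ a ∈ N.A.filter fun a => a.2 = i, f a) = N.b i

/-- The cost of a flow. -/
def cost (N : Network V) (f : V × V → ℤ) : ℝ := ∑ a ∈ N.A, N.c a * (f a : ℝ)

/-- A flow is optimal if it is feasible of minimum cost. -/
def Optimal (N : Network V) (f : V × V → ℤ) : Prop :=
  N.Feasible f ∧ ∀ g, N.Feasible g → N.cost f ≤ N.cost g

/-- The arc set `A_f` of the residual graph `D_f`. -/
def resArcs (N : Network V) (f : V × V → ℤ) : Finset (V × V) :=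
  N.A.filter (fun a => f a < N.u a) ∪ (N.A.filter fun a => N.l a < f a).image Prod.swap

/-- Residual cost of a residual arc: `c_{ij}` on forward arcs, `-c_{ji}` on backward arcs. -/
def resCost (N : Network V) (a : V × V) : ℝ :=
  if a ∈ N.A then N.c a else -N.c (a.2, a.1)

/-- Residual capacity of a residual arc. -/
def resCap (N : Network V) (f : V × V → ℤ) (a : V × V) : ℤ :=
  if a ∈ N.A then N.u a - f a else f (a.2, a.1) - N.l (a.2, a.1)

/-- Reduced cost of an arc of `A` w.r.t. node potentials `y`. -/
def redCost (N : Network V) (y : V → ℝ) (a : V × V) : ℝ := N.c a + y a.1 - y a.2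

/-- Residual reduced cost of a residual arc w.r.t. node potentials `y`. -/
def resRedCost (N : Network V) (y : V → ℝ) (a : V × V) : ℝ := N.resCost a + y a.1 - y a.2

/-- `y` is an optimal node potential for `f`. -/
def OptPotential (N : Network V) (f : V × V → ℤ) (y : V → ℝ) : Prop :=
  ∀ a ∈ N.resArcs f, 0 ≤ N.resRedCost y a

end Network

/-- A (simple, directed) cycle: a nonempty duplicate-free list of at least two vertices,
traversed cyclically. -/
structure Cyc (V : Type) where
  verts : List V
  nodup : verts.Nodup
  two_le : 2 ≤ verts.length

/-- The arcs of a cycle: consecutive (cyclic) pairs of vertices. -/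
def Cyc.arcs (C : Cyc V) : Finset (V × V) :=
  (C.verts.zip (C.verts.rotate 1)).toFinset

/-- A cycle is proper if it contains no pair of anti-parallel arcs. -/
def Cyc.Proper (C : Cyc V) : Prop := ∀ a ∈ C.arcs, (a.2, a.1) ∉ C.arcs

/-- The incidence vector `χ(C)` of a cycle. -/
def Cyc.chi (C : Cyc V) : V × V → ℤ :=
  fun a => if a ∈ C.arcs then 1 else if (a.2, a.1) ∈ C.arcs then -1 else 0

namespace Network

/-- `C` is a directed cycle of the residual graph `D_f`. -/
def IsResCycle (N : Network V) (f : V × V → ℤ) (C : Cyc V) : Prop :=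
  ∀ a ∈ C.arcs, a ∈ N.resArcs f

/-- The cost `c(f,C)` of a cycle in the residual graph. -/
def cycCost (N : Network V) (C : Cyc V) : ℝ := ∑ a ∈ C.arcs, N.resCost a

end Network

/-- The consecutive (cyclic) pairs of a list of vertices. -/
def cyclePairs (vs : List V) : List (V × V) := vs.zip (vs.rotate 1)

/-- `C` is the edge set of a cycle of the underlying undirected graph of the digraph with
arc set `A`: the arcs of `A` whose underlying edges are the consecutive (cyclic) pairs of
a duplicate-free list of at least three vertices. -/
def IsUCycle (A C : Finset (V × V)) : Prop :=
  ∃ vs : List V, vs.Nodup ∧ 3 ≤ vs.length ∧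
    (∀ p ∈ cyclePairs vs, p ∈ A ∨ p.swap ∈ A) ∧
    C = A.filter fun a => a ∈ cyclePairs vs ∨ a.swap ∈ cyclePairs vs

/-- `T ⊆ A` is a spanning tree of the underlying undirected graph: it connects all
vertices and has `|V| - 1` edges. -/
def IsSpanningTree (A T : Finset (V × V)) : Prop :=
  T ⊆ A ∧ (∀ u v : V, Relation.ReflTransGen (fun x y => (x, y) ∈ T ∨ (y, x) ∈ T) u v) ∧
    T.card + 1 = Fintype.card V

/-- `C` is the unique (fundamental) cycle induced by the non-tree arc `a`: the cycle
consisting of `a` together with tree edges only. -/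
def IsFundCycle (A T : Finset (V × V)) (a : V × V) (C : Finset (V × V)) : Prop :=
  IsUCycle A C ∧ a ∈ C ∧ C \ {a} ⊆ T

namespace Network

/-- A tree solution: a feasible flow together with a spanning tree `T` and a partition
`A ∖ T = L ∪ U` such that `f = l` on `L` and `f = u` on `U`. -/
def IsTreeSolution (N : Network V) (f : V × V → ℤ) (T L U : Finset (V × V)) : Prop :=
  N.Feasible f ∧ IsSpanningTree N.A T ∧ L ∪ U = N.A \ T ∧ Disjoint L U ∧
    (∀ a ∈ L, f a = N.l a) ∧ ∀ a ∈ U, f a = N.u a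

end Network

/-- `vs` is a traversal (in the direction of `a`, starting with `a`) of the unique cycle
induced by the non-tree arc `a`: `a` together with the tree path from `a.2` to `a.1`. -/
def IsInducedCycleList (A T : Finset (V × V)) (a : V × V) (vs : List V) : Prop :=
  vs.Nodup ∧ (∃ rest, vs = a.1 :: a.2 :: rest) ∧
    ∀ p ∈ cyclePairs vs, p = a ∨ p ∈ T ∨ p.swap ∈ T

/-- The incidence vector of the cycle traversal `vs` (in traversal direction). -/
def chiList (vs : List V) : V × V → ℤ := fun e =>
  if e ∈ cyclePairs vs then 1 else if e.swap ∈ cyclePairs vs then -1 else 0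

/-- The incidence vector `χ(C_a)` of the induced cycle `C_a` (given by the traversal list
`vs` in the direction of `a`), oriented in the direction of `a` if `a ∈ L` and opposite to
`a` otherwise, and supported on the arc set `A` of the network. -/
def chiInd (N : Network V) (L : Finset (V × V)) (a : V × V) (vs : List V) : V × V → ℤ :=
  fun e => if e ∈ N.A then (if a ∈ L then chiList vs e else -chiList vs e) else 0

/-- The cost `c(C_a) = ∑_{e ∈ A} χ_e(C_a) c_e` of an induced cycle. -/
def indCycleCost (N : Network V) (L : Finset (V × V)) (a : V × V) (vs : List V) : ℝ :=
  ∑ e ∈ N.A, (chiInd N L a vs e : ℝ) * N.c e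

/-- The equivalent undirected cycle `C_D ⊆ A` of a directed cycle `C` of the residual
graph: the arcs of `A` traversed by `C` in either direction. -/
def Network.equivCycle (N : Network V) (C : Cyc V) : Finset (V × V) :=
  N.A.filter fun a => a ∈ C.arcs ∨ (a.2, a.1) ∈ C.arcs

/-- The set `S` of non-tree arcs with zero reduced cost. -/
def zeroRedNonTree (N : Network V) (T : Finset (V × V)) (y : V → ℝ) : Finset (V × V) :=
  (N.A \ T).filter fun a => N.redCost y a = 0

/-- The free capacity `u(C_a)` of an induced cycle with incidence vector `χ`:
the minimum over the arcs `e` of the cycle of `u_e − f_e` if `χ_e = 1` and of `f_e`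
if `χ_e = −1`. -/
def freeCap (N : Network V) (f : V × V → ℤ) (χ : V × V → ℤ) : ℤ :=
  sInf {x : ℤ | ∃ e ∈ N.A, χ e ≠ 0 ∧ x = if χ e = 1 then N.u e - f e else f e}

/-!
For `a ∈ S` the incidence vector `χ = χ(C_a)` is a circulation supported on `a` and on tree
arcs. Since potential differences telescope around a cycle, `c(χ) = Σ_e χ_e c̄_e`, and `c̄`
vanishes on `T` and on `a ∈ S`; hence `f + λχ` has the cost of `f`, and it is feasible for
`0 ≤ λ ≤ u(C_a)` by the definition of the free capacity. The flows are told apart by their value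
on the arc `a`: it is `f_a ± λ` on `f + λχ(C_a)`, while `a` lies on no other induced cycle
`C_{a'}`, `a' ∈ S`.
-/

section CyclePairs

variable {α : Type} {A T : Finset (α × α)} {a e : α × α} {vs : List α}

theorem sum_map_cyclePairs_sub {M : Type} [AddCommGroup M] (vs : List α) (g : α → M) :
    ((cyclePairs vs).map fun p => g p.1 - g p.2).sum = 0 := by
  have key := Multiset.sum_map_sub (m := (cyclePairs vs : Multiset (α × α)))
    (f := fun p => g p.1) (g := fun p => g p.2)
  simp only [Multiset.map_coe, Multiset.sum_coe] at key
  rw [key, sub_eq_zero, ← Function.comp_def g Prod.fst, ← Function.comp_def g Prod.snd,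
    ← List.map_map, ← List.map_map]
  simp only [cyclePairs, List.map_fst_zip, List.map_snd_zip, List.length_rotate, le_refl]
  exact ((vs.rotate_perm 1).map g).sum_eq.symm

theorem cyclePairs_nodup (hnd : vs.Nodup) : (cyclePairs vs).Nodup :=
  .of_map Prod.fst (by simpa [cyclePairs, List.map_fst_zip] using hnd)

theorem swap_notMem_cyclePairs (hnd : vs.Nodup) (h3 : 3 ≤ vs.length) {p : α × α}
    (hp : p ∈ cyclePairs vs) : p.swap ∉ cyclePairs vs := by
  intro hq
  simp only [cyclePairs, List.mem_iff_getElem, List.getElem_zip, List.getElem_rotate, Prod.ext_iff,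
    List.length_zip, List.length_rotate, min_self, Prod.fst_swap, Prod.snd_swap] at hp hq
  obtain ⟨i, hi, hi1, hi2⟩ := hp
  obtain ⟨j, hj, hj1, hj2⟩ := hq
  have hij : (i + 1) % vs.length = j := hnd.getElem_inj_iff.mp (hi2.trans hj1.symm)
  have hji : (j + 1) % vs.length = i := hnd.getElem_inj_iff.mp (hj2.trans hi1.symm)
  have hmod : ∀ k < vs.length, (k + 1) % vs.length = if k + 1 = vs.length then 0 else k + 1 := by
    intro k hk
    split_ifs with h
    · rw [h, Nat.mod_self]
    · exact Nat.mod_eq_of_lt (by omega)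
  rw [hmod i hi] at hij
  rw [hmod j hj] at hji
  split_ifs at hij hji <;> omega

namespace IsInducedCycleList

theorem mem_cyclePairs (h : IsInducedCycleList A T a vs) : a ∈ cyclePairs vs := by
  obtain ⟨-, ⟨rest, rfl⟩, -⟩ := h
  simp [cyclePairs, List.rotate_cons_succ]

theorem mem_or_swap_mem (h : IsInducedCycleList A T a vs) (hTA : T ⊆ A) (haA : a ∈ A)
    {p : α × α} (hp : p ∈ cyclePairs vs) : p ∈ A ∨ p.swap ∈ A := by
  rcases h.2.2 p hp with rfl | hT | hT
  exacts [Or.inl haA, Or.inl (hTA hT), Or.inr (hTA hT)]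

theorem three_le_length (h : IsInducedCycleList A T a vs) (hA : ∀ e ∈ A, e.swap ∉ A)
    (hTA : T ⊆ A) (haA : a ∈ A) (haT : a ∉ T) : 3 ≤ vs.length := by
  obtain ⟨hnd, ⟨rest, rfl⟩, hpairs⟩ := h
  rcases rest with _ | ⟨z, rest⟩
  · have hback : (a.2, a.1) ∈ cyclePairs [a.1, a.2] := by simp [cyclePairs]
    rcases hpairs _ hback with heq | hT | hT
    · exact absurd (congrArg Prod.fst heq).symm (by simpa using hnd)
    · exact absurd (hTA hT) (hA a haA)
    · exact absurd hT haT
  · simp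

end IsInducedCycleList

variable [DecidableEq α]

theorem sum_chiList_smul {M : Type} [AddCommGroup M]
    (hA : ∀ e ∈ A, e.swap ∉ A) (hnd : vs.Nodup) (h3 : 3 ≤ vs.length)
    (hvs : ∀ p ∈ cyclePairs vs, p ∈ A ∨ p.swap ∈ A) (w : α × α → M) (hw : ∀ e, w e.swap = -w e) :
    ∑ e ∈ A, chiList vs e • w e = ((cyclePairs vs).map w).sum := by
  -- each cycle pair `p` is counted exactly once: as `p` if `p ∈ A`, else as `p.swap ∈ A` with
  -- coefficient `-1`
  set P := (cyclePairs vs).toFinset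
  have hin : ∑ p ∈ P with p ∈ A, w p = ∑ e ∈ A with e ∈ P, w e := by
    congr 1; ext; simp [P, and_comm]
  have hout : ∑ p ∈ P with p ∉ A, w p = ∑ e ∈ A with e.swap ∈ P, -w e := by
    refine Finset.sum_nbij' Prod.swap Prod.swap ?_ ?_ (by simp) (by simp) (by simp [hw])
    · intro p hp
      simp only [Finset.mem_filter, P, List.mem_toFinset] at hp ⊢
      exact ⟨(hvs p hp.1).resolve_left hp.2, hp.1⟩
    · intro e he
      simp only [Finset.mem_filter, P, List.mem_toFinset] at he ⊢
      exact ⟨he.2, hA e he.1⟩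
  rw [← List.sum_toFinset w (cyclePairs_nodup hnd),
    ← Finset.sum_filter_add_sum_filter_not P (· ∈ A), hin, hout, Finset.sum_filter,
    Finset.sum_filter, ← Finset.sum_add_distrib]
  refine Finset.sum_congr rfl fun e _ => ?_
  have hP : e ∈ P → e.swap ∉ P := by
    simpa [P] using swap_notMem_cyclePairs hnd h3
  have hchi : chiList vs e = if e ∈ P then 1 else if e.swap ∈ P then -1 else 0 := by
    simp [chiList, P]
  rw [hchi]
  by_cases he : e ∈ P
  · simp [he, hP he]
  · by_cases hs : e.swap ∈ P <;> simp [he, hs]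

theorem IsInducedCycleList.chiList_eq_zero (h : IsInducedCycleList A T a vs)
    (hA : ∀ e ∈ A, e.swap ∉ A) (hTA : T ⊆ A) (haA : a ∈ A) (he : e ∈ A) (hea : e ≠ a)
    (heT : e ∉ T) : chiList vs e = 0 := by
  have hfwd : e ∉ cyclePairs vs := fun hp => by
    rcases h.2.2 e hp with heq | hT | hT
    exacts [hea heq, heT hT, hA e he (hTA hT)]
  have hbwd : e.swap ∉ cyclePairs vs := fun hp => by
    rcases h.2.2 _ hp with heq | hT | hT
    · exact hA a haA (heq ▸ he)
    · exact hA e he (hTA hT)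
    · exact heT (by simpa using hT)
  simp [chiList, hfwd, hbwd]

end CyclePairs

namespace Network

variable {N : Network V}

def IsCirculation (N : Network V) (χ : V × V → ℤ) : Prop :=
  ∀ i, (∑ e ∈ N.A with e.1 = i, χ e) - ∑ e ∈ N.A with e.2 = i, χ e = 0

theorem isCirculation_of_sum_smul_sub {χ : V × V → ℤ}
    (h : ∀ g : V → ℤ, ∑ e ∈ N.A, χ e • (g e.1 - g e.2) = 0) : N.IsCirculation χ := by
  intro i
  rw [← h fun v => if v = i then 1 else 0, Finset.sum_filter, Finset.sum_filter,
    ← Finset.sum_sub_distrib]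
  refine Finset.sum_congr rfl fun e _ => ?_
  split_ifs <;> simp

theorem Feasible.add_mul_of_isCirculation {f χ : V × V → ℤ} (hf : N.Feasible f)
    (hχA : ∀ e ∉ N.A, χ e = 0) (hχ : N.IsCirculation χ) {lam : ℤ}
    (hcap : ∀ e ∈ N.A, N.l e ≤ f e + lam * χ e ∧ f e + lam * χ e ≤ N.u e) :
    N.Feasible fun e => f e + lam * χ e := by
  refine ⟨hcap, fun e he => by simp [hf.2.1 e he, hχA e he], fun i => ?_⟩
  simp only [Finset.sum_add_distrib, ← Finset.mul_sum]
  linear_combination hf.2.2 i + lam * hχ i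

theorem cost_add_mul (f χ : V × V → ℤ) (lam : ℤ) :
    N.cost (fun e => f e + lam * χ e) = N.cost f + lam * ∑ e ∈ N.A, (χ e : ℝ) * N.c e := by
  simp only [cost, Finset.mul_sum, ← Finset.sum_add_distrib]
  refine Finset.sum_congr rfl fun e _ => ?_
  push_cast
  ring

theorem finite_setOf_feasible (N : Network V) : {g | N.Feasible g}.Finite := by
  refine (Set.Finite.pi fun e => Set.finite_Icc (min (N.l e) 0) (max (N.u e) 0)).subset ?_
  intro g hg e _
  by_cases he : e ∈ N.A
  · have hge := hg.1 e he
    exact ⟨min_le_of_left_le hge.1, le_max_of_le_left hge.2⟩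
  · rw [hg.2.1 e he]
    exact ⟨min_le_right _ _, le_max_right _ _⟩

end Network

theorem freeCap_le {N : Network V} {f χ : V × V → ℤ} {e : V × V} (he : e ∈ N.A) (hχ : χ e ≠ 0) :
    freeCap N f χ ≤ if χ e = 1 then N.u e - f e else f e := by
  refine csInf_le ?_ ⟨e, he, hχ, rfl⟩
  refine (N.A.image fun e => if χ e = 1 then N.u e - f e else f e).bddBelow.mono ?_
  rintro x ⟨e, he, -, rfl⟩
  exact Finset.mem_image_of_mem _ he

section InducedCycle

variable {N : Network V} {T L : Finset (V × V)} {a e : V × V} {vs : List V}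

theorem chiInd_of_mem (he : e ∈ N.A) :
    chiInd N L a vs e = (if a ∈ L then 1 else -1) * chiList vs e := by
  simp only [chiInd, if_pos he]
  split_ifs <;> ring

theorem chiInd_of_notMem (he : e ∉ N.A) : chiInd N L a vs e = 0 :=
  if_neg he

theorem chiInd_eq_zero_or_eq_one_or_eq_neg_one :
    chiInd N L a vs e = 0 ∨ chiInd N L a vs e = 1 ∨ chiInd N L a vs e = -1 := by
  unfold chiInd chiList
  split_ifs <;> simp

namespace IsInducedCycleList

theorem chiInd_self_ne_zero (h : IsInducedCycleList N.A T a vs) (haA : a ∈ N.A) :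
    chiInd N L a vs a ≠ 0 := by
  rw [chiInd_of_mem haA]
  simp only [chiList, if_pos h.mem_cyclePairs, mul_one]
  split_ifs <;> norm_num

theorem sum_chiInd_smul_sub {M : Type} [AddCommGroup M] (h : IsInducedCycleList N.A T a vs)
    (hA : ∀ e ∈ N.A, e.swap ∉ N.A) (hTA : T ⊆ N.A) (haA : a ∈ N.A) (haT : a ∉ T) (g : V → M) :
    ∑ e ∈ N.A, chiInd N L a vs e • (g e.1 - g e.2) = 0 :=
  calc ∑ e ∈ N.A, chiInd N L a vs e • (g e.1 - g e.2)
      = ∑ e ∈ N.A, (if a ∈ L then 1 else -1 : ℤ) • chiList vs e • (g e.1 - g e.2) :=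
        Finset.sum_congr rfl fun e he => by rw [chiInd_of_mem he, mul_smul]
    _ = 0 := by
        rw [← Finset.smul_sum, sum_chiList_smul hA h.1 (h.three_le_length hA hTA haA haT)
          (fun p hp => h.mem_or_swap_mem hTA haA hp) _ (by simp), sum_map_cyclePairs_sub,
          smul_zero]

theorem indCycleCost_eq_zero (h : IsInducedCycleList N.A T a vs) (hA : ∀ e ∈ N.A, e.swap ∉ N.A)
    (hTA : T ⊆ N.A) (haA : a ∈ N.A) (haT : a ∉ T) {y : V → ℝ}
    (hyT : ∀ e ∈ T, N.redCost y e = 0) (hya : N.redCost y a = 0) : indCycleCost N L a vs = 0 := by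
  have hred : ∑ e ∈ N.A, (chiInd N L a vs e : ℝ) * N.redCost y e = 0 := by
    refine Finset.sum_eq_zero fun e he => ?_
    by_cases hea : e = a
    · simp [hea, hya]
    by_cases heT : e ∈ T
    · simp [hyT e heT]
    simp [chiInd_of_mem he, h.chiList_eq_zero hA hTA haA he hea heT]
  calc indCycleCost N L a vs
      = ∑ e ∈ N.A, ((chiInd N L a vs e : ℝ) * N.redCost y e
          - chiInd N L a vs e • (y e.1 - y e.2)) := by
        refine Finset.sum_congr rfl fun e _ => ?_
        simp only [Network.redCost, zsmul_eq_mul]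
        ring
    _ = 0 := by rw [Finset.sum_sub_distrib, hred, h.sum_chiInd_smul_sub hA hTA haA haT, sub_zero]

theorem optimal_add_mul (h : IsInducedCycleList N.A T a vs) (hN : N.Wellformed)
    (hl : ∀ e ∈ N.A, N.l e = 0) {f : V × V → ℤ} (hopt : N.Optimal f) (hTA : T ⊆ N.A)
    (haA : a ∈ N.A) (haT : a ∉ T) {y : V → ℝ} (hyT : ∀ e ∈ T, N.redCost y e = 0)
    (hya : N.redCost y a = 0) {lam : ℤ} (h0 : 0 ≤ lam)
    (hlam : lam ≤ freeCap N f (chiInd N L a vs)) :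
    N.Optimal fun e => f e + lam * chiInd N L a vs e := by
  have hA : ∀ e ∈ N.A, e.swap ∉ N.A := hN.1
  have hfeas : N.Feasible fun e => f e + lam * chiInd N L a vs e := by
    refine hopt.1.add_mul_of_isCirculation (fun e => chiInd_of_notMem)
      (Network.isCirculation_of_sum_smul_sub (h.sum_chiInd_smul_sub hA hTA haA haT)) fun e he => ?_
    have hfe := hopt.1.1 e he
    rw [hl e he] at hfe ⊢
    obtain hχ | hχ | hχ : chiInd N L a vs e = 0 ∨ chiInd N L a vs e = 1 ∨ chiInd N L a vs e = -1 :=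
      chiInd_eq_zero_or_eq_one_or_eq_neg_one
    · simp [hχ, hfe]
    · have hcap := freeCap_le (f := f) he (hχ ▸ one_ne_zero)
      simp only [hχ, if_true] at hcap ⊢
      omega
    · have hcap := freeCap_le (f := f) he (hχ ▸ neg_ne_zero.mpr one_ne_zero)
      simp only [hχ, if_neg (show (-1 : ℤ) ≠ 1 by norm_num)] at hcap ⊢
      omega
  refine ⟨hfeas, fun g hg => ?_⟩
  rw [Network.cost_add_mul, ← indCycleCost.eq_def,
    h.indCycleCost_eq_zero hA hTA haA haT hyT hya, mul_zero, add_zero]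
  exact hopt.2 g hg

end IsInducedCycleList

end InducedCycle

theorem eq_of_add_mul_chiInd_eq {N : Network V} (hN : N.Wellformed) {T L : Finset (V × V)}
    (hTA : T ⊆ N.A) {f : V × V → ℤ} {vsf : V × V → List V} {a a' : V × V} (haA : a ∈ N.A)
    (haT : a ∉ T) (ha'A : a' ∈ N.A) (hvs : IsInducedCycleList N.A T a (vsf a))
    (hvs' : IsInducedCycleList N.A T a' (vsf a')) {lam lam' : ℤ} (hlam : lam ≠ 0)
    (heq : (fun e => f e + lam * chiInd N L a (vsf a) e) =
      fun e => f e + lam' * chiInd N L a' (vsf a') e) :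
    a = a' ∧ lam = lam' := by
  have hval := add_left_cancel (congrFun heq a)
  by_cases haa : a = a'
  · subst haa
    exact ⟨rfl, mul_right_cancel₀ (hvs.chiInd_self_ne_zero haA) hval⟩
  · rw [chiInd_of_mem (a := a') haA, hvs'.chiList_eq_zero hN.1 hTA ha'A haA haa haT, mul_zero,
      mul_zero] at hval
    exact absurd hval (mul_ne_zero hlam (hvs.chiInd_self_ne_zero haA))

theorem sum_le_ncard_of_injOn {α β : Type*} {s : Finset α} {n : α → ℤ} {F : α → ℤ → β}
    {X : Set β} (hX : X.Finite) (hmaps : ∀ a ∈ s, ∀ k, 1 ≤ k → k ≤ n a → F a k ∈ X)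
    (hinj : ∀ a ∈ s, ∀ a' ∈ s, ∀ k k', 1 ≤ k → k ≤ n a → 1 ≤ k' → k' ≤ n a' →
      (a, k) ≠ (a', k') → F a k ≠ F a' k') :
    ∑ a ∈ s, n a ≤ X.ncard := by
  let P := s.sigma fun a => Finset.Icc 1 (n a)
  have hP : P.card ≤ hX.toFinset.card := by
    refine Finset.card_le_card_of_injOn (fun q => F q.1 q.2) ?_ ?_
    · rintro ⟨a, k⟩ hq
      simp only [P, Finset.coe_sigma, Set.mem_sigma_iff, Finset.coe_Icc, Set.mem_Icc] at hq
      simpa using hmaps a hq.1 k hq.2.1 hq.2.2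
    · rintro ⟨a, k⟩ hq ⟨a', k'⟩ hq' heq
      simp only [P, Finset.coe_sigma, Set.mem_sigma_iff, Finset.coe_Icc, Set.mem_Icc] at hq hq'
      by_contra hne
      exact hinj a hq.1 a' hq'.1 k k' hq.2.1 hq.2.2 hq'.2.1 hq'.2.2 (by simpa using hne) heq
  calc ∑ a ∈ s, n a ≤ ∑ a ∈ s, ((n a).toNat : ℤ) := Finset.sum_le_sum fun a _ => Int.self_le_toNat _
    _ = P.card := by simp [P, Finset.card_sigma, Int.card_Icc]
    _ ≤ X.ncard := by rw [Set.ncard_eq_toFinset_card _ hX]; exact_mod_cast hP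

theorem card_optimal_ge_general (N : Network V) (hN : N.Wellformed)
    (hl : ∀ a ∈ N.A, N.l a = 0)
    (f : V × V → ℤ) (T L U : Finset (V × V)) (hts : N.IsTreeSolution f T L U)
    (hopt : N.Optimal f)
    (y : V → ℝ) (hyT : ∀ a ∈ T, N.redCost y a = 0)
    (vsf : V × V → List V)
    (hvs : ∀ a ∈ zeroRedNonTree N T y, IsInducedCycleList N.A T a (vsf a)) :
    (∀ a ∈ zeroRedNonTree N T y, ∀ lam : ℤ,
        1 ≤ lam → lam ≤ freeCap N f (chiInd N L a (vsf a)) →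
        N.Optimal (fun e => f e + lam * chiInd N L a (vsf a) e) ∧
          (fun e => f e + lam * chiInd N L a (vsf a) e) ≠ f) ∧
    (∀ a ∈ zeroRedNonTree N T y, ∀ a' ∈ zeroRedNonTree N T y, ∀ lam lam' : ℤ,
        1 ≤ lam → lam ≤ freeCap N f (chiInd N L a (vsf a)) →
        1 ≤ lam' → lam' ≤ freeCap N f (chiInd N L a' (vsf a')) →
        (a, lam) ≠ (a', lam') →
        (fun e => f e + lam * chiInd N L a (vsf a) e) ≠
          fun e => f e + lam' * chiInd N L a' (vsf a') e) ∧
    (∑ a ∈ zeroRedNonTree N T y, freeCap N f (chiInd N L a (vsf a))) ≤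
      ({g : V × V → ℤ | N.Optimal g}.ncard : ℤ) := by
  have hTA : T ⊆ N.A := hts.2.1.1
  have hS : ∀ a ∈ zeroRedNonTree N T y, a ∈ N.A ∧ a ∉ T ∧ N.redCost y a = 0 := by
    simp [zeroRedNonTree, and_assoc]
  have hoptimal : ∀ a ∈ zeroRedNonTree N T y, ∀ lam : ℤ, 1 ≤ lam →
      lam ≤ freeCap N f (chiInd N L a (vsf a)) →
      N.Optimal fun e => f e + lam * chiInd N L a (vsf a) e := fun a ha lam h1 h2 =>
    (hvs a ha).optimal_add_mul hN hl hopt hTA (hS a ha).1 (hS a ha).2.1 hyT (hS a ha).2.2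
      (by omega) h2
  have hdistinct : ∀ a ∈ zeroRedNonTree N T y, ∀ a' ∈ zeroRedNonTree N T y, ∀ lam lam' : ℤ,
      1 ≤ lam → lam ≤ freeCap N f (chiInd N L a (vsf a)) →
      1 ≤ lam' → lam' ≤ freeCap N f (chiInd N L a' (vsf a')) → (a, lam) ≠ (a', lam') →
      (fun e => f e + lam * chiInd N L a (vsf a) e) ≠
        fun e => f e + lam' * chiInd N L a' (vsf a') e := by
    intro a ha a' ha' lam lam' h1 _ _ _ hne heq
    obtain ⟨rfl, rfl⟩ := eq_of_add_mul_chiInd_eq hN hTA (hS a ha).1 (hS a ha).2.1 (hS a' ha').1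
      (hvs a ha) (hvs a' ha') (by omega) heq
    exact hne rfl
  refine ⟨fun a ha lam h1 h2 => ⟨hoptimal a ha lam h1 h2, fun heq => ?_⟩, hdistinct,
    sum_le_ncard_of_injOn (N.finite_setOf_feasible.subset fun g hg => hg.1) hoptimal hdistinct⟩
  have hlam := (eq_of_add_mul_chiInd_eq hN hTA (hS a ha).1 (hS a ha).2.1 (hS a ha).1 (hvs a ha)
    (hvs a ha) (lam' := 0) (by omega) (heq.trans (funext fun e => by simp))).2
  omega

/-- The flows `f + λ χ(C_a)` for `a ∈ S` and `1 ≤ λ ≤ u(C_a)` are pairwise distinct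
optimal integer flows, each different from `f`; consequently the number `F` of optimal
integer flows satisfies `F ≥ ∑_{a ∈ S} u(C_a)`. -/
theorem card_optimal_ge (N : Network V) (hN : N.Wellformed)
    (hl : ∀ a ∈ N.A, N.l a = 0)
    (f : V × V → ℤ) (T L U : Finset (V × V)) (hts : N.IsTreeSolution f T L U)
    (hopt : N.Optimal f)
    (r : V) (y : V → ℝ) (hyr : y r = 0) (hyT : ∀ a ∈ T, N.redCost y a = 0)
    (vsf : V × V → List V)
    (hvs : ∀ a ∈ zeroRedNonTree N T y, IsInducedCycleList N.A T a (vsf a)) :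
    (∀ a ∈ zeroRedNonTree N T y, ∀ lam : ℤ,
        1 ≤ lam → lam ≤ freeCap N f (chiInd N L a (vsf a)) →
        N.Optimal (fun e => f e + lam * chiInd N L a (vsf a) e) ∧
          (fun e => f e + lam * chiInd N L a (vsf a) e) ≠ f) ∧
    (∀ a ∈ zeroRedNonTree N T y, ∀ a' ∈ zeroRedNonTree N T y, ∀ lam lam' : ℤ,
        1 ≤ lam → lam ≤ freeCap N f (chiInd N L a (vsf a)) →
        1 ≤ lam' → lam' ≤ freeCap N f (chiInd N L a' (vsf a')) →
        (a, lam) ≠ (a', lam') →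
        (fun e => f e + lam * chiInd N L a (vsf a) e) ≠
          fun e => f e + lam' * chiInd N L a' (vsf a') e) ∧
    (∑ a ∈ zeroRedNonTree N T y, freeCap N f (chiInd N L a (vsf a))) ≤
      ({g : V × V → ℤ | N.Optimal g}.ncard : ℤ) :=
  card_optimal_ge_general N hN hl f T L U hts hopt y hyT vsf hvs
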